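/- arXiv:2305.15274 — 4 statements merged into one kernel-verified Lean document; each statement's English description precedes it below -/
import Mathlib

section
/- Suppose s ∈ (0,1) and f satisfies (f1)–(f2). Then there exists a constant C > 0 such that F(t) ≤ C( t^{2/s} + t^{2/s} Φ_{2,s}(α_* t^{2/(2−s)}) ) for all t > 0. -/
open MeasureTheory Real Filter

noncomputable section

abbrev E2 : Type := EuclideanSpace ℝ (Fin 2)

/-- Primitive of `f` vanishing at `0`. -/
def Fprim (f : ℝ → ℝ) (t : ℝ) : ℝ := ∫ r in (0:ℝ)..t, f r

/-- `j_{2/s}`, the least natural number `≥ 2/s`. -/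
def jmin (s : ℝ) : ℕ := sInf {j : ℕ | 2 / s ≤ (j : ℝ)}

/-- The truncated exponential `Φ_{2,s}(t) = e^t - Σ_{j=0}^{j_{2/s}-2} t^j/j!`. -/
def Phi2s (s t : ℝ) : ℝ :=
  Real.exp t - ∑ j ∈ Finset.range (jmin s - 1), t ^ j / (Nat.factorial j : ℝ)

/-- Assumption (f1). -/
def Cond_f1 (s : ℝ) (f : ℝ → ℝ) : Prop :=
  ContDiff ℝ 1 f ∧ (∀ t, 0 ≤ f t) ∧ (∀ t ≤ (0:ℝ), f t = 0) ∧
    Tendsto (fun t => f t / t ^ (2 / s - 1)) (nhdsWithin 0 (Set.Ioi 0)) (nhds 0)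

/-- Assumption (f2), with data `αstar`, `b₁`, `b₂`. -/
def Cond_f2 (s αstar b₁ b₂ : ℝ) (f : ℝ → ℝ) : Prop :=
  0 < αstar ∧ 0 < b₁ ∧ 0 < b₂ ∧
    ∀ t : ℝ, 0 < t → 0 < f t ∧ f t ≤ b₁ + b₂ * Phi2s s (αstar * t ^ (2 / (2 - s)))

/-- Membership in the fractional Sobolev space `W^{s,2/s}(ℝ²)`. -/
def MemW (s : ℝ) (u : E2 → ℝ) : Prop :=
  MemLp u (ENNReal.ofReal (2 / s)) volume ∧
    Integrable (fun p : E2 × E2 => |u p.1 - u p.2| ^ (2 / s) / ‖p.1 - p.2‖ ^ 4) volume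

/-- Weak solution of the Choquard equation (Ch_s). -/
def IsWeakSol (s : ℝ) (f : ℝ → ℝ) (u : E2 → ℝ) : Prop :=
  ∀ φ : E2 → ℝ, MemW s φ →
    (∫ x : E2, ∫ y : E2,
        |u x - u y| ^ (2 / s - 2) * (u x - u y) * (φ x - φ y) / ‖x - y‖ ^ 4)
      + (∫ x : E2, |u x| ^ (2 / s - 2) * u x * φ x)
    = (1 / (2 * π)) *
        ∫ x : E2, (∫ y : E2, Real.log (1 / ‖x - y‖) * Fprim f (u y)) * f (u x) * φ x


/-! Near `0` the hypothesis `f t = o(t^{2/s-1})` gives `f t ≤ t^{2/s-1}`; away from `0`, (f2) bounds `f`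
by `b₁ + b₂ Φ_{2,s}(α_* t^{2/(2-s)})`, and the missing factor `t^{2/s-1}` is at least a positive
constant. So `f r ≤ C r^{2/s-1} (1 + Φ_{2,s}(α_* r^{2/(2-s)}))` for all `r > 0`, and since the right-hand
side is increasing in `r`, integrating over `[0, t]` costs one more factor `t`. -/

open Set

lemma exp_sub_sum_range_nonneg (n : ℕ) {x : ℝ} (hx : 0 ≤ x) :
    0 ≤ exp x - ∑ j ∈ Finset.range n, x ^ j / (Nat.factorial j : ℝ) :=
  sub_nonneg.2 (sum_le_exp_of_nonneg hx n)

lemma hasDerivAt_exp_sub_sum_range_succ (n : ℕ) (x : ℝ) :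
    HasDerivAt (fun y => exp y - ∑ j ∈ Finset.range (n + 1), y ^ j / (Nat.factorial j : ℝ))
      (exp x - ∑ j ∈ Finset.range n, x ^ j / (Nat.factorial j : ℝ)) x := by
  have hsum : HasDerivAt (fun y : ℝ => ∑ j ∈ Finset.range (n + 1), y ^ j / (Nat.factorial j : ℝ))
      (∑ j ∈ Finset.range (n + 1), (j : ℝ) * x ^ (j - 1) / (Nat.factorial j : ℝ)) x :=
    HasDerivAt.fun_sum fun j _ => (hasDerivAt_pow j x).div_const _
  have hderiv : ∑ j ∈ Finset.range (n + 1), (j : ℝ) * x ^ (j - 1) / (Nat.factorial j : ℝ)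
      = ∑ j ∈ Finset.range n, x ^ j / (Nat.factorial j : ℝ) := by
    rw [Finset.sum_range_succ', Nat.cast_zero, zero_mul, zero_div, add_zero]
    refine Finset.sum_congr rfl fun j _ => ?_
    rw [Nat.factorial_succ, Nat.add_sub_cancel, Nat.cast_mul]
    field_simp
  exact (hasDerivAt_exp x).sub (hderiv ▸ hsum)

lemma monotoneOn_exp_sub_sum_range (n : ℕ) :
    MonotoneOn (fun x => exp x - ∑ j ∈ Finset.range n, x ^ j / (Nat.factorial j : ℝ)) (Ici 0) := by
  cases n with
  | zero => simpa using exp_monotone.monotoneOn (Ici (0 : ℝ))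
  | succ n =>
    refine monotoneOn_of_hasDerivWithinAt_nonneg (convex_Ici 0)
      (fun x _ => (hasDerivAt_exp_sub_sum_range_succ n x).continuousAt.continuousWithinAt)
      (fun x _ => (hasDerivAt_exp_sub_sum_range_succ n x).hasDerivWithinAt) fun x hx => ?_
    rw [interior_Ici] at hx
    exact exp_sub_sum_range_nonneg n (le_of_lt hx)

lemma Phi2s_nonneg (s : ℝ) {x : ℝ} (hx : 0 ≤ x) : 0 ≤ Phi2s s x :=
  exp_sub_sum_range_nonneg _ hx

lemma Phi2s_monotoneOn (s : ℝ) : MonotoneOn (Phi2s s) (Ici 0) :=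
  monotoneOn_exp_sub_sum_range _

lemma Phi2s_mul_rpow_monotoneOn (s : ℝ) {α p : ℝ} (hα : 0 ≤ α) (hp : 0 ≤ p) :
    MonotoneOn (fun r => Phi2s s (α * r ^ p)) (Ioi 0) := fun _ hr _ ht hrt =>
  Phi2s_monotoneOn s (mem_Ici.2 (mul_nonneg hα (rpow_nonneg (le_of_lt hr) p)))
    (mem_Ici.2 (mul_nonneg hα (rpow_nonneg (le_of_lt ht) p)))
    (mul_le_mul_of_nonneg_left (rpow_le_rpow (le_of_lt hr) hrt hp) hα)

lemma rpow_add_rpow_mul_monotoneOn {H : ℝ → ℝ} {q : ℝ} (hq : 0 ≤ q)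
    (hH₀ : ∀ r, 0 < r → 0 ≤ H r) (hH : MonotoneOn H (Ioi 0)) :
    MonotoneOn (fun r => r ^ q + r ^ q * H r) (Ioi 0) := fun r hr t ht hrt => by
  have hpow := rpow_le_rpow (le_of_lt hr) hrt hq
  exact add_le_add hpow
    (mul_le_mul hpow (hH hr ht hrt) (hH₀ r hr) (rpow_nonneg (le_of_lt ht) q))

lemma intervalIntegral_le_mul_of_le {f : ℝ → ℝ} {a b M : ℝ} (hab : a ≤ b)
    (hf : IntervalIntegrable f volume a b) (h : ∀ r ∈ Ioo a b, f r ≤ M) :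
    ∫ r in a..b, f r ≤ (b - a) * M := by
  simpa using intervalIntegral.integral_mono_on_of_le_Ioo hab hf intervalIntegrable_const h

lemma exists_lt_rpow_of_tendsto_div_rpow {f : ℝ → ℝ} {q : ℝ}
    (hlim : Tendsto (fun r => f r / r ^ q) (nhdsWithin 0 (Ioi 0)) (nhds 0)) :
    ∃ δ > 0, ∀ r ∈ Ioo 0 δ, f r < r ^ q := by
  obtain ⟨δ, hδ, hsub⟩ := mem_nhdsGT_iff_exists_Ioo_subset.1 (hlim.eventually (gt_mem_nhds one_pos))
  refine ⟨δ, hδ, fun r hr => ?_⟩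
  have hrq : 0 < r ^ q := rpow_pos_of_pos hr.1 q
  simpa [div_lt_one hrq] using hsub hr

lemma exists_le_mul_rpow_of_tendsto_div_rpow {f H : ℝ → ℝ} {q b₁ b₂ : ℝ} (hq : 0 ≤ q)
    (hb₁ : 0 ≤ b₁) (hH : ∀ r, 0 < r → 0 ≤ H r)
    (hlim : Tendsto (fun r => f r / r ^ q) (nhdsWithin 0 (Ioi 0)) (nhds 0))
    (hbound : ∀ r, 0 < r → f r ≤ b₁ + b₂ * H r) :
    ∃ C, 0 < C ∧ ∀ r, 0 < r → f r ≤ C * (r ^ q + r ^ q * H r) := by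
  obtain ⟨δ, hδ, hsmall⟩ := exists_lt_rpow_of_tendsto_div_rpow hlim
  have hδq : 0 < δ ^ q := rpow_pos_of_pos hδ q
  refine ⟨max 1 ((δ ^ q)⁻¹ * max b₁ b₂), lt_max_of_lt_left one_pos, fun r hr => ?_⟩
  have hrqH : 0 ≤ r ^ q * H r := mul_nonneg (rpow_nonneg hr.le q) (hH r hr)
  rcases lt_or_ge r δ with hrδ | hδr
  · calc f r ≤ r ^ q := (hsmall r ⟨hr, hrδ⟩).le
      _ ≤ 1 * (r ^ q + r ^ q * H r) := by linarith
      _ ≤ _ := by gcongr; exact le_max_left _ _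
  · have hone : 1 ≤ (δ ^ q)⁻¹ * r ^ q := by
      rw [inv_mul_eq_div, one_le_div hδq]
      exact rpow_le_rpow hδ.le hδr hq
    calc f r ≤ b₁ + b₂ * H r := hbound r hr
      _ ≤ max b₁ b₂ * (1 + H r) := by
        nlinarith [le_max_left b₁ b₂, le_max_right b₁ b₂, hH r hr]
      _ ≤ max b₁ b₂ * (((δ ^ q)⁻¹ * r ^ q) * (1 + H r)) :=
        mul_le_mul_of_nonneg_left (le_mul_of_one_le_left (by linarith [hH r hr]) hone)
          (hb₁.trans (le_max_left _ _))
      _ = ((δ ^ q)⁻¹ * max b₁ b₂) * (r ^ q + r ^ q * H r) := by ring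
      _ ≤ _ := by gcongr; exact le_max_right _ _

theorem statement_10 (s : ℝ) (hs : s ∈ Set.Ioo (0:ℝ) 1)
    (f : ℝ → ℝ) (αstar b₁ b₂ : ℝ)
    (hf1 : Cond_f1 s f) (hf2 : Cond_f2 s αstar b₁ b₂ f) :
    ∃ C : ℝ, 0 < C ∧ ∀ t : ℝ, 0 < t →
      Fprim f t ≤ C * (t ^ (2 / s) + t ^ (2 / s) * Phi2s s (αstar * t ^ (2 / (2 - s)))) := by
  obtain ⟨hs0, hs1⟩ := hs
  obtain ⟨hfC1, -, -, hflim⟩ := hf1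
  obtain ⟨hα, hb₁, -, hfb⟩ := hf2
  have hq : 0 ≤ 2 / s - 1 := by rw [sub_nonneg, le_div_iff₀ hs0]; linarith
  have hp : 0 ≤ 2 / (2 - s) := div_nonneg zero_le_two (by linarith)
  have hPhi_nonneg : ∀ r : ℝ, 0 < r → 0 ≤ Phi2s s (αstar * r ^ (2 / (2 - s))) := fun r hr =>
    Phi2s_nonneg s (by positivity)
  obtain ⟨C, hC, hfC⟩ := exists_le_mul_rpow_of_tendsto_div_rpow hq hb₁.le hPhi_nonneg hflim
    fun r hr => (hfb r hr).2
  refine ⟨C, hC, fun t ht => ?_⟩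
  have hmono := rpow_add_rpow_mul_monotoneOn hq hPhi_nonneg (Phi2s_mul_rpow_monotoneOn s hα.le hp)
  calc Fprim f t ≤ (t - 0) * (C * (t ^ (2 / s - 1) +
        t ^ (2 / s - 1) * Phi2s s (αstar * t ^ (2 / (2 - s))))) :=
        intervalIntegral_le_mul_of_le ht.le (hfC1.continuous.intervalIntegrable 0 t) fun r hr =>
          (hfC r hr.1).trans (mul_le_mul_of_nonneg_left (hmono hr.1 ht hr.2.le) hC.le)
    _ = C * (t ^ (2 / s) + t ^ (2 / s) * Phi2s s (αstar * t ^ (2 / (2 - s)))) := by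
        rw [rpow_sub_one ht.ne', sub_zero]
        field_simp
end
end

section
/- Let s ∈ (0,1) and τ ∈ (0,s). Suppose f ∈ C¹(ℝ) satisfies f(t) = 0 for t ≤ 0 and f(t) > 0 for t > 0, and let F(t) := ∫₀ᵗ f(τ') dτ'. If F(t) f'(t) / f(t)² ≥ 1 − s + τ for every t > 0, then F(t) ≤ (s − τ) t f(t) for every t ≥ 0. -/
open MeasureTheory Real Filter

noncomputable section

/-!
Write `a = s - τ`. On `(0, ∞)` the hypothesis says exactly that `(F / f)' = 1 - F f' / f² ≤ a`,
so `F / f - a t` is antitone. If `F(t) > a t f(t)` at some `t > 0`, then `F / f ≥ c > 0` on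
`(0, t]`, i.e. `F' = f ≤ F / c` there; since `F(0) = 0`, Grönwall's inequality forces `F ≤ 0`
on `[0, t]`, contradicting `F(t) > 0`.
-/

open Set

theorem hasDerivAt_Fprim {f : ℝ → ℝ} (hf : Continuous f) (t : ℝ) :
    HasDerivAt (Fprim f) (f t) t :=
  intervalIntegral.integral_hasDerivAt_right (hf.intervalIntegrable 0 t)
    (hf.stronglyMeasurableAtFilter volume _) hf.continuousAt

section

variable {F f : ℝ → ℝ}

theorem nonpos_of_mul_deriv_le_self (hF : ∀ x, HasDerivAt F (f x) x) {a b c : ℝ} (hab : a ≤ b)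
    (ha : F a ≤ 0) (hc : 0 < c) (hle : ∀ x ∈ Ico a b, c * f x ≤ F x) : F b ≤ 0 := by
  have hbound : ∀ x ∈ Ico a b, f x ≤ c⁻¹ * F x + 0 := fun x hx => by
    rw [add_zero, inv_mul_eq_div, le_div_iff₀ hc, mul_comm]
    exact hle x hx
  calc F b ≤ gronwallBound 0 c⁻¹ 0 (b - a) :=
        le_gronwallBound_of_liminf_deriv_right_le
          (fun x _ => (hF x).continuousAt.continuousWithinAt)
          (fun x _ _ hr => (hF x).hasDerivWithinAt.liminf_right_slope_le hr) ha hbound b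
          ⟨hab, le_rfl⟩
    _ = 0 := gronwallBound_ε0_δ0 _ _

theorem antitoneOn_div_sub_mul (hF : ∀ x, HasDerivAt F (f x) x) (hf : Differentiable ℝ f)
    (hfpos : ∀ x, 0 < x → 0 < f x) {a : ℝ}
    (hratio : ∀ x, 0 < x → 1 - a ≤ F x * deriv f x / f x ^ 2) :
    AntitoneOn (fun x => F x / f x - a * x) (Ioi 0) := by
  have hderiv : ∀ x ∈ Ioi (0:ℝ), HasDerivAt (fun x => F x / f x - a * x)
      ((f x * f x - F x * deriv f x) / f x ^ 2 - a) x := fun x hx => by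
    have := ((hF x).div (hf x).hasDerivAt (hfpos x hx).ne').sub ((hasDerivAt_id x).const_mul a)
    rwa [mul_one] at this
  refine antitoneOn_of_deriv_nonpos (convex_Ioi 0)
    (fun x hx => (hderiv x hx).continuousAt.continuousWithinAt) ?_ ?_ <;> rw [interior_Ioi]
  · exact fun x hx => (hderiv x hx).differentiableAt.differentiableWithinAt
  · intro x hx
    have hsplit : (f x * f x - F x * deriv f x) / f x ^ 2 = 1 - F x * deriv f x / f x ^ 2 := by
      field_simp [(hfpos x hx).ne']
    rw [(hderiv x hx).deriv, hsplit]
    linarith [hratio x hx]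

theorem pos_of_hasDerivAt_of_pos (hF : ∀ x, HasDerivAt F (f x) x) (hF0 : F 0 = 0)
    (hfpos : ∀ x, 0 < x → 0 < f x) {t : ℝ} (ht : 0 < t) : 0 < F t := by
  have hmono : StrictMonoOn F (Ici 0) :=
    strictMonoOn_of_deriv_pos (convex_Ici 0) (fun x _ => (hF x).continuousAt.continuousWithinAt)
      (fun x hx => by rw [interior_Ici] at hx; rw [(hF x).deriv]; exact hfpos x hx)
  simpa [hF0] using hmono self_mem_Ici ht.le ht

theorem le_mul_mul_of_le_mul_deriv_div_sq (hF : ∀ x, HasDerivAt F (f x) x)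
    (hf : Differentiable ℝ f) (hF0 : F 0 = 0) (hf0 : f 0 = 0) (hfpos : ∀ x, 0 < x → 0 < f x)
    {a : ℝ} (ha : 0 ≤ a) (hratio : ∀ x, 0 < x → 1 - a ≤ F x * deriv f x / f x ^ 2)
    {t : ℝ} (ht : 0 ≤ t) : F t ≤ a * t * f t := by
  rcases ht.eq_or_lt with rfl | ht
  · simp [hF0]
  by_contra! hlt
  set c := F t / f t - a * t
  have hc : 0 < c := by
    rw [sub_pos, lt_div_iff₀ (hfpos t ht)]
    linarith
  have hle : ∀ x ∈ Ico 0 t, c * f x ≤ F x := by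
    rintro x ⟨hx0, hxt⟩
    rcases hx0.eq_or_lt with rfl | hx0
    · simp [hF0, hf0]
    have hcx : c ≤ F x / f x - a * x :=
      antitoneOn_div_sub_mul hF hf hfpos hratio hx0 ht hxt.le
    rw [← le_div_iff₀ (hfpos x hx0)]
    nlinarith
  exact (nonpos_of_mul_deriv_le_self hF ht.le hF0.le hc hle).not_gt
    (pos_of_hasDerivAt_of_pos hF hF0 hfpos ht)

end

theorem statement_11_general (s τ : ℝ) (hτ : τ ∈ Set.Ioo (0:ℝ) s)
    (f : ℝ → ℝ) (hf : ContDiff ℝ 1 f)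
    (hf0 : ∀ t ≤ (0:ℝ), f t = 0) (hfpos : ∀ t : ℝ, 0 < t → 0 < f t)
    (hratio : ∀ t : ℝ, 0 < t → 1 - s + τ ≤ Fprim f t * deriv f t / (f t) ^ 2) :
    ∀ t : ℝ, 0 ≤ t → Fprim f t ≤ (s - τ) * t * f t := fun t ht =>
  le_mul_mul_of_le_mul_deriv_div_sq (hasDerivAt_Fprim hf.continuous)
    (hf.differentiable one_ne_zero) intervalIntegral.integral_same (hf0 0 le_rfl) hfpos
    (sub_pos.2 hτ.2).le (fun x hx => by linarith [hratio x hx]) ht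

theorem statement_11 (s τ : ℝ) (hs : s ∈ Set.Ioo (0:ℝ) 1) (hτ : τ ∈ Set.Ioo (0:ℝ) s)
    (f : ℝ → ℝ) (hf : ContDiff ℝ 1 f)
    (hf0 : ∀ t ≤ (0:ℝ), f t = 0) (hfpos : ∀ t : ℝ, 0 < t → 0 < f t)
    (hratio : ∀ t : ℝ, 0 < t → 1 - s + τ ≤ Fprim f t * deriv f t / (f t) ^ 2) :
    ∀ t : ℝ, 0 ≤ t → Fprim f t ≤ (s - τ) * t * f t :=
  statement_11_general s τ hτ f hf hf0 hfpos hratio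
end
end

section
/- Let q > 1 be a real number, let N = ⌊q⌋ be the largest integer strictly less than q, and set q! := q(q−1)⋯(q−N), i.e. the product of the factors q − i for i = 0, 1, …, N. Then for every W ∈ [0,1): (1+W)^q − W − 1 ≤ ( q! / (q − N) ) · W / (1 − W). -/
open Real

noncomputable section

/-- Largest integer strictly less than `q` (as a natural number), for `q > 1`. -/
def genFloor (q : ℝ) : ℕ := (⌈q⌉ - 1).toNat

/-- Generalized factorial `q! = q(q-1)⋯(q-⌊q⌋)`. -/
def genFact (q : ℝ) : ℝ := ∏ i ∈ Finset.range (genFloor q + 1), (q - (i : ℝ))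

open scoped Nat

/-!
Write `q = N + r` with `N = ⌊q⌋` and `r ∈ (0, 1]`, and `S = W / (1 - W)`. Bernoulli's inequality
`(1 + W) ^ r ≤ 1 + r W` gives `(1 + W) ^ q - W - 1 ≤ ((1 + W) ^ N - 1) (1 + r)`; induction on `N`
gives `(1 + W) ^ N - 1 ≤ N! S`; and `N! (1 + r) ≤ q (q - 1) ⋯ (q - N + 1) = q! / r`.
-/

theorem le_genFloor_add_one (q : ℝ) : q ≤ genFloor q + 1 := by
  have h : ((⌈q⌉ - 1 : ℤ) : ℝ) ≤ genFloor q := by exact_mod_cast Int.self_le_toNat _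
  push_cast at h
  linarith [Int.le_ceil q]

theorem genFloor_lt {q : ℝ} (hq : 0 < q) : (genFloor q : ℝ) < q := by
  have h : ((genFloor q : ℤ) : ℝ) = ⌈q⌉ - 1 := by
    rw [genFloor, Int.toNat_of_nonneg (by linarith [Int.ceil_pos.mpr hq])]
    push_cast; ring
  push_cast at h
  linarith [Int.ceil_lt_add_one q]

theorem one_le_genFloor {q : ℝ} (hq : 1 < q) : 1 ≤ genFloor q := by
  have h : (0 : ℝ) < genFloor q := by linarith [le_genFloor_add_one q]
  exact_mod_cast h

theorem genFact_div_sub_genFloor {q : ℝ} (hq : 0 < q) :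
    genFact q / (q - genFloor q) = ∏ i ∈ Finset.range (genFloor q), (q - i) := by
  rw [genFact, Finset.prod_range_succ]
  exact mul_div_cancel_right₀ _ (sub_ne_zero.mpr (genFloor_lt hq).ne')

theorem one_add_rpow_sub_le {n : ℕ} {q W : ℝ} (hnq : n ≤ q) (hqn : q ≤ n + 1)
    (hW0 : 0 ≤ W) (hW1 : W ≤ 1) :
    (1 + W) ^ q - W - 1 ≤ ((1 + W) ^ n - 1) * (1 + (q - n)) := by
  have hpow : (1 + W) ^ q = (1 + W) ^ n * (1 + W) ^ (q - n) := by
    rw [← rpow_natCast, ← rpow_add (by linarith)]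
    ring_nf
  have hbernoulli : (1 + W) ^ (q - n) ≤ 1 + (q - n) * W :=
    rpow_one_add_le_one_add_mul_self (by linarith) (by linarith) (by linarith)
  have hn : 0 ≤ (1 + W) ^ n - 1 := sub_nonneg.mpr (one_le_pow₀ (by linarith))
  calc (1 + W) ^ q - W - 1 ≤ (1 + W) ^ n * (1 + (q - n) * W) - W - 1 := by
        rw [hpow]; gcongr
    _ = ((1 + W) ^ n - 1) * (1 + (q - n))
          - ((q - n) * (1 - W) * ((1 + W) ^ n - 1) + (1 - (q - n)) * W) := by ring
    _ ≤ ((1 + W) ^ n - 1) * (1 + (q - n)) := by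
        have h1 : 0 ≤ (q - n) * (1 - W) * ((1 + W) ^ n - 1) :=
          mul_nonneg (mul_nonneg (by linarith) (by linarith)) hn
        have h2 : 0 ≤ (1 - (q - n)) * W := mul_nonneg (by linarith) hW0
        linarith

theorem one_add_pow_sub_one_le_factorial_mul {W : ℝ} (hW0 : 0 ≤ W) (hW1 : W < 1) (n : ℕ) :
    (1 + W) ^ n - 1 ≤ n ! * (W / (1 - W)) := by
  set S := W / (1 - W)
  have hS0 : 0 ≤ S := div_nonneg hW0 (by linarith)
  have hS : S = W * S + W := by
    linear_combination (mul_div_cancel₀ W (by linarith : 1 - W ≠ 0) : (1 - W) * S = W)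
  rcases Nat.eq_zero_or_pos n with rfl | hn
  · simp only [pow_zero, sub_self, Nat.factorial_zero, Nat.cast_one, one_mul]
    exact hS0
  induction n, hn using Nat.le_induction with
  | base => simp only [pow_one, Nat.factorial_one, Nat.cast_one, one_mul]; nlinarith
  | succ n hn ih =>
    have hfact : (1 : ℝ) ≤ n ! := by exact_mod_cast n.factorial_pos
    have hSW : 0 ≤ W * S := mul_nonneg hW0 hS0
    calc (1 + W) ^ (n + 1) - 1 = (1 + W) * ((1 + W) ^ n - 1) + W := by ring
      _ ≤ (1 + W) * (n ! * S) + W := by gcongr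
      _ ≤ n ! * S + n ! * (W * S + W) := by nlinarith
      _ ≤ ((n + 1) ! : ℝ) * S := by
        rw [← hS, Nat.factorial_succ]; push_cast
        nlinarith [show (1 : ℝ) ≤ n by exact_mod_cast hn,
          mul_nonneg (by positivity : (0 : ℝ) ≤ n !) hS0]

theorem factorial_mul_le_prod_sub {n : ℕ} (hn : 1 ≤ n) {q : ℝ} (hnq : n ≤ q) :
    n ! * (1 + (q - n)) ≤ ∏ i ∈ Finset.range n, (q - i) := by
  induction n, hn using Nat.le_induction generalizing q with
  | base => simp
  | succ n hn ih =>
    push_cast at hnq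
    have hih := @ih (q - 1) (by linarith)
    have hlhs : 0 ≤ (n ! : ℝ) * (1 + (q - 1 - n)) := mul_nonneg (by positivity) (by linarith)
    rw [Finset.prod_range_succ', Nat.factorial_succ]
    simp only [Nat.cast_add, Nat.cast_one, Nat.cast_mul, Nat.cast_zero, sub_zero]
    calc ((n : ℝ) + 1) * n ! * (1 + (q - (n + 1)))
        = (n + 1) * (n ! * (1 + (q - 1 - n))) := by ring
      _ ≤ q * ∏ i ∈ Finset.range n, (q - 1 - i) := by gcongr; linarith
      _ = (∏ i ∈ Finset.range n, (q - (i + 1))) * q := by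
        rw [mul_comm]; congr 1; exact Finset.prod_congr rfl fun i _ => by ring

theorem statement_15 (q : ℝ) (hq : 1 < q) :
    ∀ W ∈ Set.Ico (0:ℝ) 1,
      (1 + W) ^ q - W - 1 ≤ genFact q / (q - (genFloor q : ℝ)) * W / (1 - W) := by
  rintro W ⟨hW0, hW1⟩
  set N := genFloor q
  have hNq : (N : ℝ) < q := genFloor_lt (by linarith)
  calc (1 + W) ^ q - W - 1 ≤ ((1 + W) ^ N - 1) * (1 + (q - N)) :=
        one_add_rpow_sub_le hNq.le (le_genFloor_add_one q) hW0 hW1.le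
    _ ≤ N ! * (W / (1 - W)) * (1 + (q - N)) := by
        gcongr
        exact one_add_pow_sub_one_le_factorial_mul hW0 hW1 N
    _ = N ! * (1 + (q - N)) * (W / (1 - W)) := by ring
    _ ≤ (∏ i ∈ Finset.range N, (q - i)) * (W / (1 - W)) := by
        gcongr; exact factorial_mul_le_prod_sub (one_le_genFloor hq) hNq.le
    _ = genFact q / (q - N) * W / (1 - W) := by
        rw [genFact_div_sub_genFloor (by linarith), mul_div_assoc]
end
end

section
/- Let s ∈ (0,1) and R > 0, and let w̄ be the tent function on ℝ². Then ∫_{ℝ²} |w̄(x)|^{2/s} dx = (π R²/4) · ( 1 + s(2+3s)/((2+s)(1+s)) ). -/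
open MeasureTheory Real Filter

noncomputable section

/-- The tent function on `ℝ²`. -/
def tent (R : ℝ) (x : E2) : ℝ :=
  if ‖x‖ ≤ R / 2 then 1 else if ‖x‖ < R then 2 - (2 / R) * ‖x‖ else 0

/-!
In polar coordinates the integral is `2π ∫₀^∞ r w(r)^p dr` with `p = 2/s` and `w` the radial
profile of the tent. The plateau `r ≤ R/2` contributes `R²/8`; on the slope the substitution
`t = 2 - 2r/R` turns the rest into `(R/2) ∫₀¹ (R - R t/2) t^p dt`, a combination of two power
integrals.
-/

open Set

theorem integral_fun_norm_euclideanSpace_fin_two (f : ℝ → ℝ) :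
    ∫ x : EuclideanSpace ℝ (Fin 2), f ‖x‖ = 2 * π * ∫ r in Ioi (0 : ℝ), r * f r := by
  rw [integral_fun_norm_addHaar volume f, finrank_euclideanSpace_fin, measureReal_def,
    EuclideanSpace.volume_ball_fin_two, ENNReal.ofReal_one, one_pow, one_mul,
    ENNReal.toReal_ofReal pi_nonneg]
  simp only [nsmul_eq_mul, smul_eq_mul, pow_one, Nat.cast_ofNat, Nat.add_one_sub_one, mul_assoc]

theorem integral_mul_two_sub_div_mul_rpow {p R : ℝ} (hp : -1 < p) (hR : 0 < R) :
    ∫ r in R / 2..R, r * (2 - 2 / R * r) ^ p = R / 2 * (R / (p + 1) - R / (2 * (p + 2))) := by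
  have hsub := intervalIntegral.integral_comp_sub_mul (a := R / 2) (b := R)
    (fun t : ℝ => R * t ^ p - R / 2 * t ^ (p + 1)) (by positivity : (2 / R : ℝ) ≠ 0) 2
  rw [show 2 - 2 / R * R = 0 by field_simp; ring, show 2 - 2 / R * (R / 2) = 1 by field_simp; ring]
    at hsub
  calc ∫ r in R / 2..R, r * (2 - 2 / R * r) ^ p
      = ∫ r in R / 2..R, R * (2 - 2 / R * r) ^ p - R / 2 * (2 - 2 / R * r) ^ (p + 1) := by
        refine intervalIntegral.integral_congr fun r hr => ?_
        rw [uIcc_of_le (by linarith)] at hr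
        have : 0 ≤ 2 - 2 / R * r := by
          rw [sub_nonneg, div_mul_eq_mul_div, div_le_iff₀ hR]; linarith [hr.2]
        rw [rpow_add_one' this (by linarith)]
        field_simp
        ring
    _ = (2 / R)⁻¹ • ∫ t in (0 : ℝ)..1, R * t ^ p - R / 2 * t ^ (p + 1) := hsub
    _ = R / 2 * (R / (p + 1) - R / (2 * (p + 2))) := by
      rw [intervalIntegral.integral_sub
          ((intervalIntegral.intervalIntegrable_rpow' hp).const_mul R)
          ((intervalIntegral.intervalIntegrable_rpow' (by linarith)).const_mul _),
        intervalIntegral.integral_const_mul, intervalIntegral.integral_const_mul,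
        integral_rpow (Or.inl hp), integral_rpow (Or.inl (by linarith))]
      simp only [one_rpow, zero_rpow (by linarith : p + 1 ≠ 0),
        zero_rpow (by linarith : p + 1 + 1 ≠ 0), smul_eq_mul]
      field_simp
      ring

def tentProfile (R r : ℝ) : ℝ :=
  if r ≤ R / 2 then 1 else if r < R then 2 - (2 / R) * r else 0

theorem tent_eq_tentProfile (R : ℝ) (x : E2) : tent R x = tentProfile R ‖x‖ := rfl

theorem tentProfile_eq_max_min {R : ℝ} (hR : 0 < R) (r : ℝ) :
    tentProfile R r = max 0 (min 1 (2 - 2 / R * r)) := by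
  have hle : ∀ c : ℝ, 2 / R * r ≤ c ↔ r ≤ c * R / 2 := fun c => by
    rw [div_mul_eq_mul_div, div_le_iff₀ hR, le_div_iff₀ two_pos]; ring_nf
  have hge : ∀ c : ℝ, c ≤ 2 / R * r ↔ c * R / 2 ≤ r := fun c => by
    rw [div_mul_eq_mul_div, le_div_iff₀ hR, div_le_iff₀ two_pos]; ring_nf
  unfold tentProfile
  split_ifs with h₁ h₂
  · rw [min_eq_left (by linarith [(hle 1).2 (by linarith)]), max_eq_right zero_le_one]
  · rw [min_eq_right (by linarith [(hge 1).2 (by linarith)]),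
      max_eq_right (by linarith [(hle 2).2 (by linarith)])]
  · rw [max_eq_left (min_le_of_right_le (by linarith [(hge 2).2 (by linarith)]))]

theorem continuous_tentProfile {R : ℝ} (hR : 0 < R) : Continuous (tentProfile R) := by
  rw [funext (tentProfile_eq_max_min hR)]
  fun_prop

theorem tentProfile_nonneg {R : ℝ} (hR : 0 < R) (r : ℝ) : 0 ≤ tentProfile R r :=
  (tentProfile_eq_max_min hR r).symm ▸ le_max_left _ _

theorem tentProfile_of_mem_Icc {R r : ℝ} (hR : 0 < R) (hr : r ∈ Icc (R / 2) R) :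
    tentProfile R r = 2 - 2 / R * r := by
  have h₀ : 0 ≤ 2 - 2 / R * r := by
    rw [sub_nonneg, div_mul_eq_mul_div, div_le_iff₀ hR]; linarith [hr.2]
  have h₁ : 2 - 2 / R * r ≤ 1 := by
    rw [sub_le_comm, div_mul_eq_mul_div, le_div_iff₀ hR]; linarith [hr.1]
  rw [tentProfile_eq_max_min hR, min_eq_right h₁, max_eq_right h₀]

theorem tentProfile_of_lt {R r : ℝ} (hR : 0 < R) (hr : R < r) : tentProfile R r = 0 := by
  rw [tentProfile, if_neg (by linarith), if_neg (by linarith)]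

theorem integral_Ioi_mul_tentProfile_rpow {p R : ℝ} (hp : 0 < p) (hR : 0 < R) :
    ∫ r in Ioi (0 : ℝ), r * tentProfile R r ^ p =
      R ^ 2 / 8 + R / 2 * (R / (p + 1) - R / (2 * (p + 2))) := by
  have hcont : Continuous fun r => r * tentProfile R r ^ p :=
    continuous_id.mul ((continuous_tentProfile hR).rpow_const fun _ => Or.inr hp.le)
  have hsupp : ∫ r in Ioi (0 : ℝ), r * tentProfile R r ^ p =
      ∫ r in Ioc (0 : ℝ) R, r * tentProfile R r ^ p :=
    setIntegral_eq_of_subset_of_ae_sdiff_eq_zero measurableSet_Ioi.nullMeasurableSet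
      Ioc_subset_Ioi_self <| ae_of_all _ fun r hr => by
        rw [tentProfile_of_lt hR (not_le.1 fun h => hr.2 ⟨hr.1, h⟩), zero_rpow hp.ne', mul_zero]
  have hplateau : ∫ r in (0 : ℝ)..R / 2, r * tentProfile R r ^ p = R ^ 2 / 8 := by
    rw [intervalIntegral.integral_congr (g := fun r => r) fun r hr => ?_, integral_id]
    · ring
    rw [uIcc_of_le (by linarith)] at hr
    simp only [tentProfile, if_pos hr.2, one_rpow, mul_one]
  have hslope : ∫ r in R / 2..R, r * tentProfile R r ^ p =
      ∫ r in R / 2..R, r * (2 - 2 / R * r) ^ p := by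
    refine intervalIntegral.integral_congr fun r hr => ?_
    rw [uIcc_of_le (by linarith)] at hr
    simp only [tentProfile_of_mem_Icc hR hr]
  rw [hsupp, ← intervalIntegral.integral_of_le hR.le,
    ← intervalIntegral.integral_add_adjacent_intervals (b := R / 2) (hcont.intervalIntegrable _ _)
      (hcont.intervalIntegrable _ _), hplateau, hslope,
    integral_mul_two_sub_div_mul_rpow (by linarith) hR]

theorem statement_16 (s R : ℝ) (hs : s ∈ Set.Ioo (0:ℝ) 1) (hR : 0 < R) :
    (∫ x : E2, |tent R x| ^ (2 / s)) =
      π * R ^ 2 / 4 * (1 + s * (2 + 3 * s) / ((2 + s) * (1 + s))) := by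
  have hs₀ : 0 < s := hs.1
  simp only [tent_eq_tentProfile, abs_of_nonneg (tentProfile_nonneg hR _)]
  rw [integral_fun_norm_euclideanSpace_fin_two fun r => tentProfile R r ^ (2 / s),
    integral_Ioi_mul_tentProfile_rpow (by positivity) hR]
  field_simp
  ring
end
end
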